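/- Let n ≥ 1, let K ⊆ ℝⁿ be a nonempty compact ball-body, and set d = diam(K). Then 2 − d ≤ diam(K^c) ≤ √(4 − d²); in particular 2 ≤ diam(K) + diam(K^c) ≤ 2√2. -/

import Mathlib

/-!
Let `L = cDual K`. A pair `x ∈ K`, `y ∈ L` of maximal distance is at distance exactly `1`:
otherwise the point beyond `x` on the ray from `y`, at distance `1 - dist x y` from `x`, still
lies in `K = cDual L` and is farther from `y`. If `diam K ≤ 1`, the point beyond `x` at distance
`1 - diam K` lies in `L` and is at distance `2 - diam K` from `y`; by the symmetry `K ↔ L` this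
gives `diam K + diam L ≥ 2`. For the upper bound, two points `p, q ∈ K` both lie in the
unit balls about any `u, v ∈ L`, so by Apollonius' theorem applied at the midpoint of `u v`,
`dist p q ^ 2 + dist u v ^ 2 ≤ 4`.
-/

open Metric Set

noncomputable section

/-- The `c`-dual of a set `A ⊆ ℝⁿ`. -/
def cDual {n : ℕ} (A : Set (EuclideanSpace ℝ (Fin n))) : Set (EuclideanSpace ℝ (Fin n)) :=
  {y | ∀ x ∈ A, ‖x - y‖ ≤ 1}

section Geometry

variable {E : Type*}

theorem exists_dist_eq_and_dist_eq_add [NormedAddCommGroup E] [NormedSpace ℝ E] [Nontrivial E]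
    (x y : E) {r : ℝ} (hr : 0 ≤ r) : ∃ q, dist x q = r ∧ dist q y = dist x y + r := by
  obtain ⟨w, hw, hxy⟩ : ∃ w : E, ‖w‖ = 1 ∧ x - y = ‖x - y‖ • w := by
    rcases eq_or_ne x y with rfl | hne
    · obtain ⟨w, hw⟩ := exists_norm_eq E zero_le_one
      exact ⟨w, hw, by simp⟩
    · have hpos : 0 < ‖x - y‖ := norm_pos_iff.2 (sub_ne_zero.2 hne)
      refine ⟨‖x - y‖⁻¹ • (x - y), ?_, ?_⟩
      · rw [norm_smul, norm_inv, norm_norm, inv_mul_cancel₀ hpos.ne']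
      · rw [smul_inv_smul₀ hpos.ne']
  refine ⟨x + r • w, ?_, ?_⟩
  · rw [dist_eq_norm, sub_add_cancel_left, norm_neg, norm_smul, hw, Real.norm_of_nonneg hr,
      mul_one]
  · have : x + r • w - y = (dist x y + r) • w := by
      rw [add_smul, dist_eq_norm, ← hxy]; abel
    rw [dist_eq_norm, this, norm_smul, hw, mul_one, Real.norm_of_nonneg (by positivity)]

theorem dist_sq_add_dist_sq_le_of_dist_le [NormedAddCommGroup E] [InnerProductSpace ℝ E]
    {p q u v : E} {r : ℝ} (hpu : dist p u ≤ r) (hpv : dist p v ≤ r) (hqu : dist q u ≤ r)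
    (hqv : dist q v ≤ r) : dist p q ^ 2 + dist u v ^ 2 ≤ 4 * r ^ 2 := by
  set m := midpoint ℝ u v
  have hp := EuclideanGeometry.dist_sq_add_dist_sq_eq_two_mul_dist_midpoint_sq_add_half_dist_sq
    p u v
  have hq := EuclideanGeometry.dist_sq_add_dist_sq_eq_two_mul_dist_midpoint_sq_add_half_dist_sq
    q u v
  have hpq : dist p q ≤ dist p m + dist q m := dist_triangle_right p q m
  have hr : 0 ≤ r := dist_nonneg.trans hpu
  nlinarith [dist_nonneg (x := p) (y := q), dist_nonneg (x := p) (y := m),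
    dist_nonneg (x := q) (y := m), sq_nonneg (dist p m - dist q m),
    mul_le_mul hpu hpu dist_nonneg hr, mul_le_mul hpv hpv dist_nonneg hr,
    mul_le_mul hqu hqu dist_nonneg hr, mul_le_mul hqv hqv dist_nonneg hr]

end Geometry

theorem Metric.diam_sq_le_of_forall_dist_sq_le {α : Type*} [PseudoMetricSpace α] {s : Set α}
    {c : ℝ} (hc : 0 ≤ c) (h : ∀ a ∈ s, ∀ b ∈ s, dist a b ^ 2 ≤ c) : diam s ^ 2 ≤ c := by
  have := diam_le_of_forall_dist_le (Real.sqrt_nonneg c) fun a ha b hb =>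
    Real.le_sqrt_of_sq_le (h a ha b hb)
  simpa [Real.sq_sqrt hc] using pow_le_pow_left₀ diam_nonneg this 2

section BallBody

variable {n : ℕ} {A : Set (EuclideanSpace ℝ (Fin n))} {x y : EuclideanSpace ℝ (Fin n)}

theorem mem_cDual : y ∈ cDual A ↔ ∀ x ∈ A, dist x y ≤ 1 := by
  simp [cDual, dist_eq_norm]

@[simp]
theorem cDual_empty : cDual (∅ : Set (EuclideanSpace ℝ (Fin n))) = univ := by
  simp [cDual]

theorem cDual_eq_biInter (A : Set (EuclideanSpace ℝ (Fin n))) :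
    cDual A = ⋂ x ∈ A, closedBall x 1 := by
  ext y
  simp [mem_cDual, dist_comm]

theorem isClosed_cDual (A : Set (EuclideanSpace ℝ (Fin n))) : IsClosed (cDual A) := by
  rw [cDual_eq_biInter]
  exact isClosed_biInter fun x _ => isClosed_closedBall

theorem cDual_subset_closedBall (hx : x ∈ A) : cDual A ⊆ closedBall x 1 := by
  rw [cDual_eq_biInter]
  exact biInter_subset_of_mem hx

theorem isCompact_cDual (hA : A.Nonempty) : IsCompact (cDual A) :=
  let ⟨_, hx⟩ := hA
  (isCompact_closedBall _ 1).of_isClosed_subset (isClosed_cDual A) (cDual_subset_closedBall hx)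

theorem closedBall_subset_cDual {r : ℝ} (h : A ⊆ closedBall x r) :
    closedBall x (1 - r) ⊆ cDual A := fun q hq =>
  mem_cDual.2 fun a ha => calc
    dist a q ≤ dist a x + dist x q := dist_triangle a x q
    _ ≤ r + (1 - r) := add_le_add (h ha) (by rw [dist_comm]; exact hq)
    _ = 1 := add_sub_cancel _ _

theorem cDual_nonempty [Nontrivial (EuclideanSpace ℝ (Fin n))] (hA : Bornology.IsBounded A)
    (hbb : A = cDual (cDual A)) : (cDual A).Nonempty := by
  rw [nonempty_iff_ne_empty]
  intro h
  rw [h, cDual_empty] at hbb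
  rw [hbb] at hA
  exact NormedSpace.unbounded_univ ℝ _ hA

theorem exists_dist_eq_one [Nontrivial (EuclideanSpace ℝ (Fin n))] (hA : IsCompact A)
    (hne : A.Nonempty) (hbb : A = cDual (cDual A)) : ∃ x ∈ A, ∃ y ∈ cDual A, dist x y = 1 := by
  obtain ⟨⟨x, y⟩, ⟨hx, hy⟩, hmax⟩ := (hA.prod (isCompact_cDual hne)).exists_isMaxOn
    (hne.prod (cDual_nonempty hA.isBounded hbb)) (continuous_fst.dist continuous_snd).continuousOn
  have hfar : ∀ a ∈ A, ∀ b ∈ cDual A, dist a b ≤ dist x y := fun a ha b hb =>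
    isMaxOn_iff.1 hmax (a, b) (mk_mem_prod ha hb)
  refine ⟨x, hx, y, hy, le_antisymm (mem_cDual.1 hy x hx) ?_⟩
  obtain ⟨q, hxq, hqy⟩ := exists_dist_eq_and_dist_eq_add x y (sub_nonneg.2 (mem_cDual.1 hy x hx))
  have hq : q ∈ A := by
    rw [hbb]
    refine closedBall_subset_cDual (fun b hb => ?_) (by rw [mem_closedBall, dist_comm, hxq])
    rw [mem_closedBall, dist_comm]
    exact hfar x hx b hb
  have := hfar q hq y hy
  rw [hqy] at this
  linarith

theorem two_le_diam_add_diam_cDual (hA : Bornology.IsBounded A) (hx : x ∈ A) (hy : y ∈ cDual A)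
    (hxy : dist x y = 1) (hd : diam A ≤ 1) : 2 ≤ diam A + diam (cDual A) := by
  have : Nontrivial (EuclideanSpace ℝ (Fin n)) := nontrivial_of_ne x y (dist_pos.1 (by simp [hxy]))
  obtain ⟨q, hxq, hqy⟩ := exists_dist_eq_and_dist_eq_add x y (sub_nonneg.2 hd)
  have hq : q ∈ cDual A :=
    closedBall_subset_cDual (fun a ha => mem_closedBall.2 (dist_le_diam_of_mem hA ha hx))
      (by rw [mem_closedBall, dist_comm, hxq])
  have := dist_le_diam_of_mem (isCompact_cDual ⟨x, hx⟩).isBounded hq hy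
  linarith

theorem diam_cDual_sq_add_diam_sq_le_four (hA : A.Nonempty) (hA' : (cDual A).Nonempty) :
    diam (cDual A) ^ 2 + diam A ^ 2 ≤ 4 := by
  obtain ⟨p, hp⟩ := hA
  obtain ⟨w, hw⟩ := hA'
  have key : ∀ u ∈ cDual A, ∀ v ∈ cDual A, ∀ a ∈ A, ∀ b ∈ A, dist a b ^ 2 + dist u v ^ 2 ≤ 4 :=
    fun u hu v hv a ha b hb => by
      simpa using dist_sq_add_dist_sq_le_of_dist_le (mem_cDual.1 hu a ha) (mem_cDual.1 hv a ha)
        (mem_cDual.1 hu b hb) (mem_cDual.1 hv b hb)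
  have hdiam : ∀ u ∈ cDual A, ∀ v ∈ cDual A, diam A ^ 2 ≤ 4 - dist u v ^ 2 := fun u hu v hv =>
    diam_sq_le_of_forall_dist_sq_le (by linarith [key u hu v hv p hp p hp, sq_nonneg (dist p p)])
      fun a ha b hb => by linarith [key u hu v hv a ha b hb]
  have hdiam_le_two : diam A ^ 2 ≤ 4 := by simpa using hdiam w hw w hw
  have := diam_sq_le_of_forall_dist_sq_le (s := cDual A) (c := 4 - diam A ^ 2)
    (sub_nonneg.2 hdiam_le_two) fun u hu v hv => by linarith [hdiam u hu v hv]
  linarith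

end BallBody

/-- For a nonempty compact ball-body `K` with `d = diam(K)` one has
`2 - d ≤ diam(K^c) ≤ √(4 - d²)`; in particular `2 ≤ diam(K) + diam(K^c) ≤ 2√2`. -/
theorem stmt12 (n : ℕ) (hn : 1 ≤ n) (K : Set (EuclideanSpace ℝ (Fin n)))
    (hne : K.Nonempty) (hcomp : IsCompact K) (hbb : K = cDual (cDual K)) :
    (2 - Metric.diam K ≤ Metric.diam (cDual K) ∧
        Metric.diam (cDual K) ≤ Real.sqrt (4 - Metric.diam K ^ 2)) ∧
      2 ≤ Metric.diam K + Metric.diam (cDual K) ∧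
        Metric.diam K + Metric.diam (cDual K) ≤ 2 * Real.sqrt 2 := by
  have : Nonempty (Fin n) := ⟨⟨0, hn⟩⟩
  have hL : (cDual K).Nonempty := cDual_nonempty hcomp.isBounded hbb
  obtain ⟨x, hx, y, hy, hxy⟩ := exists_dist_eq_one hcomp hne hbb
  have hlower : 2 ≤ diam K + diam (cDual K) := by
    rcases le_or_gt (diam K) 1 with hK | hK
    · exact two_le_diam_add_diam_cDual hcomp.isBounded hx hy hxy hK
    rcases le_or_gt (diam (cDual K)) 1 with hK' | hK'
    · have := two_le_diam_add_diam_cDual (isCompact_cDual hne).isBounded hy (hbb ▸ hx)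
        (by rw [dist_comm, hxy]) hK'
      rw [← hbb] at this
      linarith
    · linarith
  have hupper := diam_cDual_sq_add_diam_sq_le_four hne hL
  have hsqrt2 := Real.sq_sqrt (zero_le_two (α := ℝ))
  refine ⟨⟨by linarith, Real.le_sqrt_of_sq_le (by linarith)⟩, hlower, ?_⟩
  refine le_of_sq_le_sq ?_ (by positivity)
  nlinarith [sq_nonneg (diam K - diam (cDual K))]
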